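/- Let τ = t₀ t₁ ... be a stream satisfying curve pair (ξ^L, ξ^U): for all i, k, ξ^L(k) ≤ t_{i+k} − t_i ≤ ξ^U(k). Then for any n, m with m ≤ n, the tightened bounds hold: max(ξ^L(n−m), ξ^L(n) − ξ^U(m)) ≤ t_{i+n} − t_{i+m} ≤ min(ξ^U(n−m), ξ^U(n) − ξ^L(m)) for all i ≥ 0. In particular, the deconvolution-refined upper curve ξ'^U(d) = min over n ≥ d of (ξ^U(n) − ξ^L(n−d)) is still a valid upper bound: t_{i+d} − t_i ≤ ξ'^U(d). -/

import Mathlib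

/-!
Every bound is obtained by splitting a window of the stream into two windows that share an
endpoint: `t (i + n) - t (i + m)` is a window of length `n - m` starting at `i + m`, and also
the difference of the windows of lengths `n` and `m` starting at `i`. The refined upper curve
then follows from `t (i + d) - t i = (t (i + n) - t i) - (t (i + n) - t (i + d))` for `d ≤ n`.
-/

def SatisfiesCurves {α : Type*} [AddCommGroup α] [LE α] (t ξL ξU : ℕ → α) : Prop :=
  ∀ i k : ℕ, ξL k ≤ t (i + k) - t i ∧ t (i + k) - t i ≤ ξU k

namespace SatisfiesCurves

variable {α : Type*} [AddCommGroup α] [PartialOrder α] {t ξL ξU : ℕ → α}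

theorem lower_le_sub (h : SatisfiesCurves t ξL ξU) {m n : ℕ} (hmn : m ≤ n) (i : ℕ) :
    ξL (n - m) ≤ t (i + n) - t (i + m) := by
  rw [show i + n = i + m + (n - m) by omega]
  exact (h (i + m) (n - m)).1

theorem sub_le_upper (h : SatisfiesCurves t ξL ξU) {m n : ℕ} (hmn : m ≤ n) (i : ℕ) :
    t (i + n) - t (i + m) ≤ ξU (n - m) := by
  rw [show i + n = i + m + (n - m) by omega]
  exact (h (i + m) (n - m)).2

variable [IsOrderedAddMonoid α]

theorem lower_sub_upper_le_sub (h : SatisfiesCurves t ξL ξU) (i m n : ℕ) :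
    ξL n - ξU m ≤ t (i + n) - t (i + m) := by
  rw [← sub_sub_sub_cancel_right (t (i + n)) (t (i + m)) (t i)]
  exact sub_le_sub (h i n).1 (h i m).2

theorem sub_le_upper_sub_lower (h : SatisfiesCurves t ξL ξU) (i m n : ℕ) :
    t (i + n) - t (i + m) ≤ ξU n - ξL m := by
  rw [← sub_sub_sub_cancel_right (t (i + n)) (t (i + m)) (t i)]
  exact sub_le_sub (h i n).2 (h i m).1

theorem sub_le_upper_sub_lower_sub (h : SatisfiesCurves t ξL ξU) {d n : ℕ} (hdn : d ≤ n)
    (i : ℕ) : t (i + d) - t i ≤ ξU n - ξL (n - d) := by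
  rw [← sub_sub_sub_cancel_left (t i) (t (i + d)) (t (i + n))]
  exact sub_le_sub (h i n).2 (h.lower_le_sub hdn i)

theorem sub_le_sInf_deconvolution {β : Type*} [AddCommGroup β] [ConditionallyCompleteLattice β]
    [IsOrderedAddMonoid β] {t ξL ξU : ℕ → β} (h : SatisfiesCurves t ξL ξU) (i d : ℕ) :
    t (i + d) - t i ≤ sInf {x : β | ∃ n : ℕ, d ≤ n ∧ x = ξU n - ξL (n - d)} := by
  refine le_csInf ⟨_, d, le_rfl, rfl⟩ ?_
  rintro x ⟨n, hdn, rfl⟩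
  exact h.sub_le_upper_sub_lower_sub hdn i

end SatisfiesCurves

theorem stmt6_general (t : ℕ → ℝ) (ξL ξU : ℕ → ℝ)
    (hcurve : ∀ i k : ℕ, ξL k ≤ t (i + k) - t i ∧ t (i + k) - t i ≤ ξU k) :
    (∀ i n m : ℕ, m ≤ n →
      max (ξL (n - m)) (ξL n - ξU m) ≤ t (i + n) - t (i + m) ∧
      t (i + n) - t (i + m) ≤ min (ξU (n - m)) (ξU n - ξL m)) ∧
    (∀ i d : ℕ,
      BddBelow {x : ℝ | ∃ n : ℕ, d ≤ n ∧ x = ξU n - ξL (n - d)} →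
      t (i + d) - t i ≤ sInf {x : ℝ | ∃ n : ℕ, d ≤ n ∧ x = ξU n - ξL (n - d)}) := by
  have h : SatisfiesCurves t ξL ξU := hcurve
  refine ⟨fun i n m hmn => ⟨?_, ?_⟩, fun i d _ => h.sub_le_sInf_deconvolution i d⟩
  · exact max_le (h.lower_le_sub hmn i) (h.lower_sub_upper_le_sub i m n)
  · exact le_min (h.sub_le_upper hmn i) (h.sub_le_upper_sub_lower i m n)

theorem stmt6 (t : ℕ → ℝ) (ξL ξU : ℕ → ℝ)
    (hmono : Monotone t)
    (hcurve : ∀ i k : ℕ, ξL k ≤ t (i + k) - t i ∧ t (i + k) - t i ≤ ξU k) :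
    (∀ i n m : ℕ, m ≤ n →
      max (ξL (n - m)) (ξL n - ξU m) ≤ t (i + n) - t (i + m) ∧
      t (i + n) - t (i + m) ≤ min (ξU (n - m)) (ξU n - ξL m)) ∧
    (∀ i d : ℕ,
      BddBelow {x : ℝ | ∃ n : ℕ, d ≤ n ∧ x = ξU n - ξL (n - d)} →
      t (i + d) - t i ≤ sInf {x : ℝ | ∃ n : ℕ, d ≤ n ∧ x = ξU n - ξL (n - d)}) :=
  stmt6_general t ξL ξU hcurve
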